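/- In a many-to-one market with responsive preferences, if μ and μ' are stable matchings and college c is not at full capacity in μ (|μ(c)| < q_c), then c receives exactly the same set of students in both matchings: μ(c) = μ'(c). (Rural Hospitals Theorem, part 3.) -/
import Mathlib


/-! Many-to-one matching framework (students `S` and colleges `C`).

Each student has a strict preference order over `C ∪ {∅}` and each college a
strict (responsive) ranking of `S ∪ {∅}`, both encoded by injective rank
functions into `ℕ` (larger = more preferred); `none` is the outside option.
A matching is a function `μ : S → Option C`; the set of students assigned to a
college is recovered by `assignedSet`. -/

variable {S C : Type*} [Fintype S] [DecidableEq S] [DecidableEq C]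

def assignedSet (μ : S → Option C) (c : C) [Fintype S] [DecidableEq S] [DecidableEq C] :
    Finset S :=
  Finset.univ.filter (fun s => μ s = some c)

structure MPrefs (S C : Type*) where
  prS : S → Option C → ℕ
  prC : C → Option S → ℕ
  injS : ∀ s, Function.Injective (prS s)
  injC : ∀ c, Function.Injective (prC c)

def MIndivRational (P : MPrefs S C) (q : C → ℕ) (μ : S → Option C) : Prop :=
  (∀ s c, μ s = some c → P.prS s none < P.prS s (some c) ∧ P.prC c none < P.prC c (some s)) ∧
  ∀ c, (assignedSet μ c).card ≤ q c

def MBlocks (P : MPrefs S C) (q : C → ℕ) (μ : S → Option C) (s : S) (c : C) : Prop :=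
  P.prS s (μ s) < P.prS s (some c) ∧
  ((∃ s' ∈ assignedSet μ c, P.prC c (some s') < P.prC c (some s)) ∨
   (P.prC c none < P.prC c (some s) ∧ (assignedSet μ c).card < q c))

def MStable (P : MPrefs S C) (q : C → ℕ) (μ : S → Option C) : Prop :=
  MIndivRational P q μ ∧ ∀ s c, ¬ MBlocks P q μ s c


lemma mem_assignedSet {μ : S → Option C} {c : C} {s : S} :
    s ∈ assignedSet μ c ↔ μ s = some c := by
  simp [assignedSet]

def branchSet (ν ν' : S → Option C) : Option C → Finset S
  | none => ∅
  | some c => assignedSet ν' c \ assignedSet ν c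

@[simp] lemma branchSet_none (ν ν' : S → Option C) : branchSet ν ν' none = ∅ := rfl

@[simp] lemma branchSet_some (ν ν' : S → Option C) (c : C) :
    branchSet ν ν' (some c) = assignedSet ν' c \ assignedSet ν c := rfl

/-- Key counting lemma: if some student strictly prefers the stable matching `ν`
to the stable matching `ν'`, then both the college that student attends under `ν`
and the one attended under `ν'` are full in both matchings. -/
lemma keyLemma (P : MPrefs S C) (q : C → ℕ) (ν ν' : S → Option C)
    (hν : MStable P q ν) (hν' : MStable P q ν')
    (s0 : S) (hs0 : P.prS s0 (ν' s0) < P.prS s0 (ν s0))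
    (c : C) (hcc : ν s0 = some c ∨ ν' s0 = some c) :
    (assignedSet ν c).card = q c ∧ (assignedSet ν' c).card = q c := by
  classical
  set Bf : Finset S := Finset.univ.filter (fun s => P.prS s (ν' s) < P.prS s (ν s)) with hBf
  have memBf : ∀ s, s ∈ Bf ↔ P.prS s (ν' s) < P.prS s (ν s) := by
    intro s; simp [hBf]
  -- every student preferring ν is matched under ν to a college full under ν',
  -- and every ν'-student of that college beats them
  have F2 : ∀ s ∈ Bf, ∃ c1, ν s = some c1 ∧ (assignedSet ν' c1).card = q c1 ∧
      ∀ t ∈ assignedSet ν' c1, P.prC c1 (some s) < P.prC c1 (some t) := by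
    intro s hs
    rw [memBf] at hs
    obtain ⟨c1, hc1⟩ : ∃ c1, ν s = some c1 := by
      cases h : ν s with
      | some c1 => exact ⟨c1, rfl⟩
      | none =>
        rw [h] at hs
        cases h' : ν' s with
        | none => rw [h'] at hs; exact absurd hs (lt_irrefl _)
        | some c2 =>
          have := (hν'.1.1 s c2 h').1
          rw [h'] at hs
          omega
    have hlike : P.prC c1 none < P.prC c1 (some s) := (hν.1.1 s c1 hc1).2
    have hwant : P.prS s (ν' s) < P.prS s (some c1) := by rw [hc1] at hs; exact hs
    have hnb := hν'.2
    have hfull : q c1 ≤ (assignedSet ν' c1).card := by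
      by_contra h
      push_neg at h
      exact hnb s c1 ⟨hwant, Or.inr ⟨hlike, h⟩⟩
    have hbeat : ∀ t ∈ assignedSet ν' c1, P.prC c1 (some s) < P.prC c1 (some t) := by
      intro t ht
      have hle : P.prC c1 (some s) ≤ P.prC c1 (some t) := by
        by_contra h
        push_neg at h
        exact hnb s c1 ⟨hwant, Or.inl ⟨t, ht, h⟩⟩
      rcases hle.lt_or_eq with h | h
      · exact h
      · exfalso
        have hst : (some s : Option S) = some t := P.injC c1 h
        have hts : s = t := by injection hst
        subst hts
        rw [mem_assignedSet] at ht
        rw [ht] at hwant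
        exact absurd hwant (lt_irrefl _)
    exact ⟨c1, hc1, le_antisymm (hν'.1.2 c1) hfull, hbeat⟩
  set Cimg : Finset (Option C) := Bf.image ν with hCimg
  set Y : Finset S := Cimg.biUnion (branchSet ν ν') with hY
  -- Step A : Y ⊆ Bf
  have hYsub : Y ⊆ Bf := by
    intro t ht
    rw [hY, Finset.mem_biUnion] at ht
    obtain ⟨oc, hoc, htoc⟩ := ht
    rw [hCimg, Finset.mem_image] at hoc
    obtain ⟨s, hsB, hsoc⟩ := hoc
    obtain ⟨c1, hc1, hcard, hbeat⟩ := F2 s hsB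
    rw [← hsoc, hc1, branchSet_some, Finset.mem_sdiff] at htoc
    obtain ⟨ht', htn⟩ := htoc
    have hν't : ν' t = some c1 := mem_assignedSet.1 ht'
    have hbt := hbeat t ht'
    rw [memBf]
    rcases lt_trichotomy (P.prS t (ν t)) (P.prS t (some c1)) with h | h | h
    · exact absurd ⟨h, Or.inl ⟨s, mem_assignedSet.2 hc1, hbt⟩⟩ (hν.2 t c1)
    · exact absurd (mem_assignedSet.2 (P.injS t h)) htn
    · rw [hν't]; exact h
  -- fibers of ν over Bf are small
  have hsubf : ∀ c1, ∀ s ∈ Bf, ν s = some c1 →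
      Bf.filter (fun u => ν u = some c1) ⊆ assignedSet ν c1 \ assignedSet ν' c1 := by
    intro c1 s hsB hsc
    intro u hu
    rw [Finset.mem_filter] at hu
    obtain ⟨huB, huc⟩ := hu
    rw [Finset.mem_sdiff]
    refine ⟨mem_assignedSet.2 huc, fun hu' => ?_⟩
    rw [memBf] at huB
    rw [mem_assignedSet] at hu'
    rw [huc, hu'] at huB
    exact absurd huB (lt_irrefl _)
  have hsd : ∀ c1, (assignedSet ν' c1).card = q c1 →
      (assignedSet ν c1 \ assignedSet ν' c1).card ≤ (assignedSet ν' c1 \ assignedSet ν c1).card := by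
    intro c1 hq
    have e1 := Finset.card_sdiff_add_card_inter (assignedSet ν c1) (assignedSet ν' c1)
    have e2 := Finset.card_sdiff_add_card_inter (assignedSet ν' c1) (assignedSet ν c1)
    have e3 : (assignedSet ν c1 ∩ assignedSet ν' c1).card
        = (assignedSet ν' c1 ∩ assignedSet ν c1).card := by rw [Finset.inter_comm]
    have e4 : (assignedSet ν c1).card ≤ (assignedSet ν' c1).card := by
      rw [hq]; exact hν.1.2 c1
    omega
  have hfib : ∀ oc ∈ Cimg,
      (Bf.filter (fun u => ν u = oc)).card ≤ (branchSet ν ν' oc).card := by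
    intro oc hoc
    rw [hCimg, Finset.mem_image] at hoc
    obtain ⟨s, hsB, hsoc⟩ := hoc
    obtain ⟨c1, hc1, hcard', hbeat⟩ := F2 s hsB
    have hoc' : oc = some c1 := by rw [← hsoc, hc1]
    subst hoc'
    calc (Bf.filter (fun u => ν u = some c1)).card
        ≤ (assignedSet ν c1 \ assignedSet ν' c1).card :=
          Finset.card_le_card (hsubf c1 s hsB hc1)
      _ ≤ (assignedSet ν' c1 \ assignedSet ν c1).card := hsd c1 hcard'
      _ = (branchSet ν ν' (some c1)).card := by rw [branchSet_some]
  have hcount : Bf.card = ∑ oc ∈ Cimg, (Bf.filter (fun u => ν u = oc)).card :=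
    Finset.card_eq_sum_card_fiberwise (fun x hx => Finset.mem_image_of_mem ν hx)
  have hdisj : ∀ oc ∈ Cimg, ∀ oc' ∈ Cimg, oc ≠ oc' →
      Disjoint (branchSet ν ν' oc) (branchSet ν ν' oc') := by
    intro oc _ oc' _ hne
    rw [Finset.disjoint_left]
    intro t ht ht'
    apply hne
    cases oc with
    | none => simp at ht
    | some c1 =>
      cases oc' with
      | none => simp at ht'
      | some c2 =>
        rw [branchSet_some, Finset.mem_sdiff, mem_assignedSet] at ht ht'
        rw [ht.1.symm.trans ht'.1]
  have hYcard : Y.card = ∑ oc ∈ Cimg, (branchSet ν ν' oc).card :=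
    Finset.card_biUnion hdisj
  have hle1 : Y.card ≤ Bf.card := Finset.card_le_card hYsub
  have hsum_eq : ∑ oc ∈ Cimg, (Bf.filter (fun u => ν u = oc)).card
      = ∑ oc ∈ Cimg, (branchSet ν ν' oc).card := by
    have h1 : ∑ oc ∈ Cimg, (Bf.filter (fun u => ν u = oc)).card
        ≤ ∑ oc ∈ Cimg, (branchSet ν ν' oc).card := Finset.sum_le_sum hfib
    have h2 : ∑ oc ∈ Cimg, (branchSet ν ν' oc).card
        ≤ ∑ oc ∈ Cimg, (Bf.filter (fun u => ν u = oc)).card := by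
      rw [← hYcard, ← hcount]; exact hle1
    omega
  have hpt : ∀ oc ∈ Cimg,
      (Bf.filter (fun u => ν u = oc)).card = (branchSet ν ν' oc).card :=
    (Finset.sum_eq_sum_iff_of_le hfib).1 hsum_eq
  have hYeq : Y = Bf := by
    apply Finset.eq_of_subset_of_card_le hYsub
    rw [hcount, hsum_eq, ← hYcard]
  -- per-college conclusion
  have main : ∀ c1, (some c1) ∈ Cimg →
      (assignedSet ν c1).card = q c1 ∧ (assignedSet ν' c1).card = q c1 := by
    intro c1 h1
    have h1' := h1
    rw [hCimg, Finset.mem_image] at h1'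
    obtain ⟨s, hsB, hsc⟩ := h1'
    obtain ⟨c1', hc1', hcard', hbeat⟩ := F2 s hsB
    have hcc1 : c1' = c1 := by rw [hc1'] at hsc; injection hsc
    subst hcc1
    refine ⟨?_, hcard'⟩
    have hp := hpt (some c1') h1
    rw [branchSet_some] at hp
    have hx1 : (Bf.filter (fun u => ν u = some c1')).card
        ≤ (assignedSet ν c1' \ assignedSet ν' c1').card :=
      Finset.card_le_card (hsubf c1' s hsB hc1')
    have hx2 := hsd c1' hcard'
    have e1 := Finset.card_sdiff_add_card_inter (assignedSet ν c1') (assignedSet ν' c1')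
    have e2 := Finset.card_sdiff_add_card_inter (assignedSet ν' c1') (assignedSet ν c1')
    have e3 : (assignedSet ν c1' ∩ assignedSet ν' c1').card
        = (assignedSet ν' c1' ∩ assignedSet ν c1').card := by rw [Finset.inter_comm]
    omega
  have hs0B : s0 ∈ Bf := (memBf s0).2 hs0
  rcases hcc with h | h
  · exact main c (by rw [hCimg, Finset.mem_image]; exact ⟨s0, hs0B, h⟩)
  · have hs0Y : s0 ∈ Y := by rw [hYeq]; exact hs0B
    rw [hY, Finset.mem_biUnion] at hs0Y
    obtain ⟨oc, hoc, hsoc⟩ := hs0Y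
    cases oc with
    | none => simp at hsoc
    | some c2 =>
      rw [branchSet_some, Finset.mem_sdiff, mem_assignedSet] at hsoc
      have : c2 = c := by rw [hsoc.1] at h; injection h
      subst this
      exact main c2 hoc

/-- **Rural Hospitals, part 3.** A college below capacity in one stable matching
receives exactly the same set of students in any other stable matching. -/
theorem stmt10 (P : MPrefs S C) (q : C → ℕ) (μ μ' : S → Option C)
    (hμ : MStable P q μ) (hμ' : MStable P q μ')
    (c : C) (hc : (assignedSet μ c).card < q c) :
    assignedSet μ c = assignedSet μ' c := by
  apply Finset.Subset.antisymm
  · intro t ht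
    rw [mem_assignedSet] at ht
    by_contra hne
    have hne' : μ' t ≠ some c := fun h => hne (mem_assignedSet.2 h)
    rcases lt_trichotomy (P.prS t (μ' t)) (P.prS t (some c)) with h | h | h
    · have := (keyLemma P q μ μ' hμ hμ' t (by rw [ht]; exact h) c (Or.inl ht)).1
      omega
    · exact hne' (P.injS t h)
    · have := (keyLemma P q μ' μ hμ' hμ t (by rw [ht]; exact h) c (Or.inr ht)).2
      omega
  · intro s hs
    rw [mem_assignedSet] at hs
    rcases lt_trichotomy (P.prS s (μ s)) (P.prS s (some c)) with h | h | h
    · exact absurd ⟨h, Or.inr ⟨(hμ'.1.1 s c hs).2, hc⟩⟩ (hμ.2 s c)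
    · exact mem_assignedSet.2 (P.injS s h)
    · exfalso
      have := (keyLemma P q μ μ' hμ hμ' s (by rw [hs]; exact h) c (Or.inr hs)).1
      omega
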